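/- Let x̄(C,ρ) and ȳ(C,ρ) denote the unique maximisers of F(α,β;ρ) with C = α−β. For every fixed C > 0, the maps ρ ↦ x̄(C,ρ) and ρ ↦ ȳ(C,ρ) are real-analytic and strictly decreasing on (0,1). For every fixed ρ ∈ (0,1), the maps C ↦ x̄(C,ρ) and C ↦ ȳ(C,ρ) are real-analytic on (0,∞), with C ↦ x̄(C,ρ) strictly increasing and C ↦ ȳ(C,ρ) strictly decreasing. -/

import Mathlib

/-- The system of equations (in terms of `C = α−β` and `ρ`) characterising the
maximisers `(x̄(C,ρ), ȳ(C,ρ))` of `F(α,β;ρ)`: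
`2 < x`, `2 < y`, `log 2 + ρ log(x−2) + (1−ρ) log(y−2) = 0` and
`C + log(x(y−2)/(y(x−2))) = 0`. -/
def solveSysC (C ρ x y : ℝ) : Prop :=
  2 < x ∧ 2 < y ∧
  Real.log 2 + ρ * Real.log (x - 2) + (1 - ρ) * Real.log (y - 2) = 0 ∧
  C + Real.log (x * (y - 2) / (y * (x - 2))) = 0

/-!
With `t = e^{-C}` the second equation says `1 - 2/y = t (1 - 2/x)`, i.e. `y = 2x / ((1-t)x + 2t)`,
and on this curve the first equation gives `ρ` as a quotient of logarithms in `x` whose derivative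
is negative wherever `ρ > 0`. Solved for `y` instead, the first equation gives
`y - 2 = exp (-(log 2 + ρ log (x-2)) / (1-ρ))`, decreasing in `x`, and on this curve the second
equation gives `C` as a function of `x` with positive derivative. In both cases `x̄` is the inverse
of a strictly monotone analytic function with nonvanishing derivative, hence analytic (analytic
inverse function theorem) and monotone, and `ȳ` is an analytic monotone function of `x̄`.
-/

open Real Set Filter Topology

theorem AnalyticOnNhd.of_rightInvOn {𝕜 : Type*} [NontriviallyNormedField 𝕜] [CompleteSpace 𝕜]
    [CharZero 𝕜] {f g : 𝕜 → 𝕜} {U V : Set 𝕜} (hf : AnalyticOnNhd 𝕜 f U)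
    (hf' : ∀ a ∈ U, deriv f a ≠ 0) (hinj : InjOn f U) (hU : IsOpen U) (hV : IsOpen V)
    (hg : MapsTo g V U) (hgf : RightInvOn g f V) : AnalyticOnNhd 𝕜 g V := by
  intro s hs
  have ha : g s ∈ U := hg hs
  rw [← hgf hs, ← analyticAt_comp_iff_of_deriv_ne_zero (hf _ ha) (hf' _ ha)]
  refine analyticAt_id.congr ?_
  have hV' : ∀ᶠ b in 𝓝 (g s), f b ∈ V :=
    (hf _ ha).continuousAt.preimage_mem_nhds (hV.mem_nhds ((hgf hs).symm ▸ hs))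
  filter_upwards [hU.mem_nhds ha, hV'] with b hbU hbV
  exact (hinj (hg hbV) hbU (hgf hbV)).symm

theorem StrictAntiOn.of_rightInvOn {α β : Type*} [LinearOrder α] [LinearOrder β]
    {f : α → β} {g : β → α} {U : Set α} {V : Set β} (hf : StrictAntiOn f U)
    (hg : MapsTo g V U) (hgf : RightInvOn g f V) : StrictAntiOn g V := fun s hs s' hs' h =>
  (hf.lt_iff_gt (hg hs) (hg hs')).1 (by rwa [hgf hs, hgf hs'])

theorem StrictMonoOn.of_rightInvOn {α β : Type*} [LinearOrder α] [LinearOrder β]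
    {f : α → β} {g : β → α} {U : Set α} {V : Set β} (hf : StrictMonoOn f U)
    (hg : MapsTo g V U) (hgf : RightInvOn g f V) : StrictMonoOn g V := fun s hs s' hs' h =>
  (hf.lt_iff_lt (hg hs) (hg hs')).1 (by rwa [hgf hs, hgf hs'])

noncomputable section

def ratioCurve (t x : ℝ) : ℝ := 2 * x / ((1 - t) * x + 2 * t)

def rhoOnRatioCurve (t x : ℝ) : ℝ :=
  (log ((1 - t) * x + 2 * t) - log (x - 2) - log (4 * t)) /
    (log ((1 - t) * x + 2 * t) - log (2 * t))

-- For `0 < t < 1`, the set of `x > 2` where `rhoOnRatioCurve t x > 0`.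
def rhoPosSet (t : ℝ) : Set ℝ := {x | 2 < x ∧ 4 * t * (x - 2) < (1 - t) * x + 2 * t}

def weightCurve (ρ x : ℝ) : ℝ := exp (-(log 2 + ρ * log (x - 2)) / (1 - ρ)) + 2

-- `log y - log (y - 2) + log (x - 2) - log x` with `y = weightCurve ρ x`.
def cOnWeightCurve (ρ x : ℝ) : ℝ :=
  log (weightCurve ρ x) + (log 2 + ρ * log (x - 2)) / (1 - ρ) + log (x - 2) - log x

end

section RatioCurve

variable {t x : ℝ}

lemma ratioCurve_denom_pos (ht0 : 0 < t) (ht1 : t < 1) (hx : 0 < x) :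
    0 < (1 - t) * x + 2 * t := by
  nlinarith

lemma analyticOnNhd_ratioCurve (ht0 : 0 < t) (ht1 : t < 1) :
    AnalyticOnNhd ℝ (ratioCurve t) (Ioi 0) := fun x hx =>
  AnalyticAt.div (by fun_prop) (by fun_prop) (ratioCurve_denom_pos ht0 ht1 hx).ne'

lemma strictMonoOn_ratioCurve (ht0 : 0 < t) (ht1 : t < 1) :
    StrictMonoOn (ratioCurve t) (Ioi 0) := by
  intro x (hx : 0 < x) y (hy : 0 < y) hxy
  rw [ratioCurve, ratioCurve, div_lt_div_iff₀ (ratioCurve_denom_pos ht0 ht1 hx)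
    (ratioCurve_denom_pos ht0 ht1 hy)]
  nlinarith

lemma rhoOnRatioCurve_denom_pos (ht0 : 0 < t) (ht1 : t < 1) (hx : 0 < x) :
    0 < log ((1 - t) * x + 2 * t) - log (2 * t) :=
  sub_pos.2 (log_lt_log (by positivity) (by nlinarith))

lemma rhoOnRatioCurve_numer_pos_iff (ht0 : 0 < t) (ht1 : t < 1) (hx : 2 < x) :
    0 < log ((1 - t) * x + 2 * t) - log (x - 2) - log (4 * t) ↔
      4 * t * (x - 2) < (1 - t) * x + 2 * t := by
  rw [← log_lt_log_iff (by nlinarith) (ratioCurve_denom_pos ht0 ht1 (by linarith)),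
    log_mul (x := 4 * t) (by positivity) (by linarith)]
  constructor <;> intro <;> linarith

lemma analyticOnNhd_rhoOnRatioCurve (ht0 : 0 < t) (ht1 : t < 1) :
    AnalyticOnNhd ℝ (rhoOnRatioCurve t) (Ioi 2) := by
  intro x (hx : 2 < x)
  have hq := ratioCurve_denom_pos ht0 ht1 (by linarith : (0 : ℝ) < x)
  exact AnalyticAt.div (by fun_prop (disch := linarith)) (by fun_prop (disch := linarith))
    (rhoOnRatioCurve_denom_pos ht0 ht1 (by linarith)).ne'

lemma hasDerivAt_rhoOnRatioCurve (ht0 : 0 < t) (ht1 : t < 1) (hx : 2 < x) :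
    HasDerivAt (rhoOnRatioCurve t)
      ((((1 - t) / ((1 - t) * x + 2 * t) - 1 / (x - 2)) *
          (log ((1 - t) * x + 2 * t) - log (2 * t)) -
        (log ((1 - t) * x + 2 * t) - log (x - 2) - log (4 * t)) *
          ((1 - t) / ((1 - t) * x + 2 * t))) /
        (log ((1 - t) * x + 2 * t) - log (2 * t)) ^ 2) x := by
  have hq := ratioCurve_denom_pos ht0 ht1 (by linarith : (0 : ℝ) < x)
  have hlogq : HasDerivAt (fun x => log ((1 - t) * x + 2 * t))
      ((1 - t) / ((1 - t) * x + 2 * t)) x :=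
    (((hasDerivAt_id x).const_mul (1 - t)).add_const (2 * t)).log hq.ne' |>.congr_deriv (by simp)
  have hlogx : HasDerivAt (fun x => log (x - 2)) (1 / (x - 2)) x :=
    ((hasDerivAt_id x).sub_const 2).log (by simp; linarith)
  exact ((hlogq.sub hlogx).sub_const _).div (hlogq.sub_const _)
    (rhoOnRatioCurve_denom_pos ht0 ht1 (by linarith)).ne'

lemma deriv_rhoOnRatioCurve_neg (ht0 : 0 < t) (ht1 : t < 1) (hx : x ∈ rhoPosSet t) :
    deriv (rhoOnRatioCurve t) x < 0 := by
  obtain ⟨hx2, hxq⟩ := hx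
  rw [(hasDerivAt_rhoOnRatioCurve ht0 ht1 hx2).deriv]
  have hq := ratioCurve_denom_pos ht0 ht1 (by linarith : (0 : ℝ) < x)
  have hD := rhoOnRatioCurve_denom_pos ht0 ht1 (by linarith : (0 : ℝ) < x)
  have hN := (rhoOnRatioCurve_numer_pos_iff ht0 ht1 hx2).2 hxq
  have hN' : (1 - t) / ((1 - t) * x + 2 * t) - 1 / (x - 2) < 0 := by
    rw [sub_neg, div_lt_div_iff₀ hq (by linarith)]
    nlinarith
  have hD' : 0 < (1 - t) / ((1 - t) * x + 2 * t) := div_pos (by linarith) hq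
  exact div_neg_of_neg_of_pos (by nlinarith [mul_pos hN hD']) (by positivity)

lemma isOpen_rhoPosSet : IsOpen (rhoPosSet t) :=
  (isOpen_lt continuous_const continuous_id).inter
    (isOpen_lt (by fun_prop : Continuous fun x : ℝ => 4 * t * (x - 2)) (by fun_prop))

lemma convex_rhoPosSet : Convex ℝ (rhoPosSet t) := by
  refine convex_iff_ordConnected.2 ⟨fun x hx y hy z hz => ⟨hx.1.trans_le hz.1, ?_⟩⟩
  rcases le_total 0 (5 * t - 1) with h | h
  · nlinarith [hy.2, hz.2]
  · nlinarith [hx.2, hz.1]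

lemma strictAntiOn_rhoOnRatioCurve (ht0 : 0 < t) (ht1 : t < 1) :
    StrictAntiOn (rhoOnRatioCurve t) (rhoPosSet t) :=
  strictAntiOn_of_deriv_neg convex_rhoPosSet
    ((analyticOnNhd_rhoOnRatioCurve ht0 ht1).continuousOn.mono fun _ hx => hx.1)
    (fun _ hx => deriv_rhoOnRatioCurve_neg ht0 ht1 (isOpen_rhoPosSet.interior_eq ▸ hx))

lemma ratioCurve_of_solveSysC {C ρ y : ℝ} (h : solveSysC C ρ x y) :
    y = ratioCurve (exp (-C)) x := by
  obtain ⟨hx, hy, -, hC⟩ := h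
  have hratio : x * (y - 2) / (y * (x - 2)) = exp (-C) := by
    have hpos : 0 < x * (y - 2) / (y * (x - 2)) := by
      apply div_pos <;> apply mul_pos <;> linarith
    rw [← exp_log hpos, show log _ = -C by linarith]
  rw [div_eq_iff (by nlinarith)] at hratio
  rw [ratioCurve, eq_div_iff]
  · linarith
  · nlinarith

lemma rhoOnRatioCurve_eq_of_solveSysC {C ρ y : ℝ} (hC : 0 < C) (h : solveSysC C ρ x y) :
    rhoOnRatioCurve (exp (-C)) x = ρ := by
  have hy := ratioCurve_of_solveSysC h
  obtain ⟨hx, -, hfirst, -⟩ := h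
  set t := exp (-C)
  have ht0 : 0 < t := exp_pos _
  have ht1 : t < 1 := exp_lt_one_iff.2 (by linarith)
  have hq := ratioCurve_denom_pos ht0 ht1 (by linarith : (0 : ℝ) < x)
  have hlogy : log (y - 2) = log 2 + log t + log (x - 2) - log ((1 - t) * x + 2 * t) := by
    have hgap : 2 * x / ((1 - t) * x + 2 * t) - 2 =
        2 * t * (x - 2) / ((1 - t) * x + 2 * t) := by
      rw [eq_div_iff hq.ne', sub_mul, div_mul_cancel₀ _ hq.ne']
      ring
    rw [hy, ratioCurve, hgap, log_div (by nlinarith) hq.ne', log_mul (by positivity) (by linarith),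
      log_mul two_ne_zero ht0.ne']
  have h2t : log (2 * t) = log 2 + log t := log_mul two_ne_zero ht0.ne'
  have h4t : log (4 * t) = 2 * log 2 + log t := by
    rw [log_mul (by norm_num) ht0.ne', show (4 : ℝ) = 2 ^ 2 by norm_num, log_pow]
    push_cast
    ring
  rw [rhoOnRatioCurve, div_eq_iff (rhoOnRatioCurve_denom_pos ht0 ht1 (by linarith)).ne']
  linear_combination (1 - ρ) * hlogy + ρ * h2t - h4t - hfirst

lemma mem_rhoPosSet_of_solveSysC {C ρ y : ℝ} (hC : 0 < C) (hρ : 0 < ρ)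
    (h : solveSysC C ρ x y) : x ∈ rhoPosSet (exp (-C)) := by
  have hρeq := rhoOnRatioCurve_eq_of_solveSysC hC h
  have ht0 : 0 < exp (-C) := exp_pos _
  have ht1 : exp (-C) < 1 := exp_lt_one_iff.2 (by linarith)
  refine ⟨h.1, (rhoOnRatioCurve_numer_pos_iff ht0 ht1 h.1).1 ?_⟩
  rw [rhoOnRatioCurve] at hρeq
  exact (div_pos_iff_of_pos_right (rhoOnRatioCurve_denom_pos ht0 ht1 (by linarith [h.1]))).1
    (hρeq ▸ hρ)

end RatioCurve

section WeightCurve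

variable {ρ x : ℝ}

lemma two_lt_weightCurve : 2 < weightCurve ρ x := by
  unfold weightCurve
  linarith [exp_pos (-(log 2 + ρ * log (x - 2)) / (1 - ρ))]

lemma analyticOnNhd_weightCurve : AnalyticOnNhd ℝ (weightCurve ρ) (Ioi 2) := by
  intro x (hx : 2 < x)
  unfold weightCurve
  fun_prop (disch := linarith)

lemma strictAntiOn_weightCurve (hρ0 : 0 < ρ) (hρ1 : ρ < 1) :
    StrictAntiOn (weightCurve ρ) (Ioi 2) := by
  intro x (hx : 2 < x) x' (hx' : 2 < x') hxx'
  have hlog := log_lt_log (by linarith) (by linarith : x - 2 < x' - 2)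
  unfold weightCurve
  gcongr ?_ + 2
  exact exp_lt_exp.2 (div_lt_div_of_pos_right (by nlinarith) (by linarith))

lemma analyticOnNhd_cOnWeightCurve : AnalyticOnNhd ℝ (cOnWeightCurve ρ) (Ioi 2) := by
  intro x (hx : 2 < x)
  have := analyticOnNhd_weightCurve (ρ := ρ) x hx
  have := two_lt_weightCurve (ρ := ρ) (x := x)
  unfold cOnWeightCurve
  fun_prop (disch := linarith)

lemma hasDerivAt_cOnWeightCurve (hρ1 : ρ < 1) (hx : 2 < x) :
    HasDerivAt (cOnWeightCurve ρ)
      (2 * ρ / ((1 - ρ) * (x - 2) * weightCurve ρ x) + 2 / (x * (x - 2))) x := by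
  have hlog : HasDerivAt (fun x => log (x - 2)) (1 / (x - 2)) x :=
    ((hasDerivAt_id x).sub_const 2).log (by simp; linarith)
  have hexp : HasDerivAt (fun x => (log 2 + ρ * log (x - 2)) / (1 - ρ))
      (ρ * (1 / (x - 2)) / (1 - ρ)) x :=
    ((hlog.const_mul ρ).const_add _).div_const _
  have hw : HasDerivAt (weightCurve ρ)
      (exp (-(log 2 + ρ * log (x - 2)) / (1 - ρ)) * (-(ρ * (1 / (x - 2))) / (1 - ρ))) x :=
    ((((hlog.const_mul ρ).const_add _).fun_neg.div_const _).exp).add_const 2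
  have hw0 : 0 < weightCurve ρ x := zero_lt_two.trans two_lt_weightCurve
  refine ((((hw.log hw0.ne').add hexp).add hlog).sub
    (hasDerivAt_log (by linarith : x ≠ 0))).congr_deriv ?_
  have hx2 : x - 2 ≠ 0 := by linarith
  have hρ : 1 - ρ ≠ 0 := by linarith
  unfold weightCurve at hw0 ⊢
  field_simp
  ring

lemma deriv_cOnWeightCurve_pos (hρ0 : 0 < ρ) (hρ1 : ρ < 1) (hx : 2 < x) :
    0 < deriv (cOnWeightCurve ρ) x := by
  rw [(hasDerivAt_cOnWeightCurve hρ1 hx).deriv]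
  have hw0 : 0 < weightCurve ρ x := zero_lt_two.trans two_lt_weightCurve
  have : 0 < (1 - ρ) * (x - 2) := mul_pos (by linarith) (by linarith)
  have : 0 < x * (x - 2) := mul_pos (by linarith) (by linarith)
  positivity

lemma strictMonoOn_cOnWeightCurve (hρ0 : 0 < ρ) (hρ1 : ρ < 1) :
    StrictMonoOn (cOnWeightCurve ρ) (Ioi 2) :=
  strictMonoOn_of_deriv_pos (convex_Ioi 2) analyticOnNhd_cOnWeightCurve.continuousOn
    (fun _ hx => deriv_cOnWeightCurve_pos hρ0 hρ1 (by rwa [interior_Ioi] at hx))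

lemma log_sub_two_of_solveSysC {C y : ℝ} (hρ1 : ρ < 1) (h : solveSysC C ρ x y) :
    log (y - 2) = -(log 2 + ρ * log (x - 2)) / (1 - ρ) := by
  rw [eq_div_iff (by linarith)]
  linarith [h.2.2.1]

lemma weightCurve_eq_of_solveSysC {C y : ℝ} (hρ1 : ρ < 1) (h : solveSysC C ρ x y) :
    y = weightCurve ρ x := by
  rw [weightCurve, ← log_sub_two_of_solveSysC hρ1 h, exp_log (by linarith [h.2.1])]
  ring

lemma cOnWeightCurve_eq_of_solveSysC {C y : ℝ} (hρ1 : ρ < 1) (h : solveSysC C ρ x y) :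
    cOnWeightCurve ρ x = C := by
  have hlogy := log_sub_two_of_solveSysC hρ1 h
  rw [cOnWeightCurve, ← weightCurve_eq_of_solveSysC hρ1 h]
  obtain ⟨hx, hy, -, hsecond⟩ := h
  rw [log_div (by positivity) (by positivity), log_mul (by linarith) (by linarith),
    log_mul (by linarith) (by linarith)] at hsecond
  rw [neg_div] at hlogy
  linarith

end WeightCurve

theorem solveSysC_solution_rho_dependence {C : ℝ} (hC : 0 < C) {X Y : ℝ → ℝ}
    (h : ∀ ρ ∈ Ioo (0 : ℝ) 1, solveSysC C ρ (X ρ) (Y ρ)) :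
    AnalyticOnNhd ℝ X (Ioo 0 1) ∧ AnalyticOnNhd ℝ Y (Ioo 0 1) ∧
      StrictAntiOn X (Ioo 0 1) ∧ StrictAntiOn Y (Ioo 0 1) := by
  have ht0 : 0 < exp (-C) := exp_pos _
  have ht1 : exp (-C) < 1 := exp_lt_one_iff.2 (by linarith)
  have hX : MapsTo X (Ioo 0 1) (rhoPosSet (exp (-C))) := fun ρ hρ =>
    mem_rhoPosSet_of_solveSysC hC hρ.1 (h ρ hρ)
  have hX' : MapsTo X (Ioo 0 1) (Ioi 0) := fun ρ hρ => zero_lt_two.trans (hX hρ).1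
  have hinv : RightInvOn X (rhoOnRatioCurve (exp (-C))) (Ioo 0 1) := fun ρ hρ =>
    rhoOnRatioCurve_eq_of_solveSysC hC (h ρ hρ)
  have hY : EqOn (ratioCurve (exp (-C)) ∘ X) Y (Ioo 0 1) := fun ρ hρ =>
    (ratioCurve_of_solveSysC (h ρ hρ)).symm
  have hanti := strictAntiOn_rhoOnRatioCurve ht0 ht1
  have hXan : AnalyticOnNhd ℝ X (Ioo 0 1) :=
    ((analyticOnNhd_rhoOnRatioCurve ht0 ht1).mono fun _ hx => hx.1).of_rightInvOn
      (fun x hx => (deriv_rhoOnRatioCurve_neg ht0 ht1 hx).ne) hanti.injOn isOpen_rhoPosSet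
      isOpen_Ioo hX hinv
  have hXanti := hanti.of_rightInvOn hX hinv
  exact ⟨hXan, ((analyticOnNhd_ratioCurve ht0 ht1).comp hXan hX').congr isOpen_Ioo hY, hXanti,
    ((strictMonoOn_ratioCurve ht0 ht1).comp_strictAntiOn hXanti hX').congr hY⟩

theorem solveSysC_solution_C_dependence {ρ : ℝ} (hρ0 : 0 < ρ) (hρ1 : ρ < 1) {X Y : ℝ → ℝ}
    (h : ∀ C ∈ Ioi (0 : ℝ), solveSysC C ρ (X C) (Y C)) :
    AnalyticOnNhd ℝ X (Ioi 0) ∧ AnalyticOnNhd ℝ Y (Ioi 0) ∧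
      StrictMonoOn X (Ioi 0) ∧ StrictAntiOn Y (Ioi 0) := by
  have hX : MapsTo X (Ioi 0) (Ioi 2) := fun C hC => (h C hC).1
  have hinv : RightInvOn X (cOnWeightCurve ρ) (Ioi 0) := fun C hC =>
    cOnWeightCurve_eq_of_solveSysC hρ1 (h C hC)
  have hY : EqOn (weightCurve ρ ∘ X) Y (Ioi 0) := fun C hC =>
    (weightCurve_eq_of_solveSysC hρ1 (h C hC)).symm
  have hmono := strictMonoOn_cOnWeightCurve hρ0 hρ1
  have hXan : AnalyticOnNhd ℝ X (Ioi 0) :=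
    analyticOnNhd_cOnWeightCurve.of_rightInvOn
      (fun x hx => (deriv_cOnWeightCurve_pos hρ0 hρ1 hx).ne') hmono.injOn isOpen_Ioi isOpen_Ioi
      hX hinv
  have hXmono := hmono.of_rightInvOn hX hinv
  exact ⟨hXan, (analyticOnNhd_weightCurve.comp hXan hX).congr isOpen_Ioi hY, hXmono,
    ((strictAntiOn_weightCurve hρ0 hρ1).comp_strictMonoOn hXmono hX).congr hY⟩

/-- Let `X C ρ = x̄(C,ρ)` and `Y C ρ = ȳ(C,ρ)` be the unique maximisers of
`F(α,β;ρ)` with `C = α−β`, i.e. the solutions of the characterising system.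
For fixed `C > 0`, `ρ ↦ x̄(C,ρ)` and `ρ ↦ ȳ(C,ρ)` are real-analytic and
strictly decreasing on `(0,1)`; for fixed `ρ ∈ (0,1)`, `C ↦ x̄(C,ρ)` and
`C ↦ ȳ(C,ρ)` are real-analytic on `(0,∞)`, the former strictly increasing and
the latter strictly decreasing. -/
theorem stmt16 (X Y : ℝ → ℝ → ℝ)
    (hXY : ∀ C ρ : ℝ, 0 < C → 0 < ρ → ρ < 1 → solveSysC C ρ (X C ρ) (Y C ρ)) :
    (∀ C : ℝ, 0 < C →
      AnalyticOnNhd ℝ (X C) (Set.Ioo 0 1) ∧ AnalyticOnNhd ℝ (Y C) (Set.Ioo 0 1) ∧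
      StrictAntiOn (X C) (Set.Ioo 0 1) ∧ StrictAntiOn (Y C) (Set.Ioo 0 1)) ∧
    (∀ ρ : ℝ, 0 < ρ → ρ < 1 →
      AnalyticOnNhd ℝ (fun C => X C ρ) (Set.Ioi 0) ∧
      AnalyticOnNhd ℝ (fun C => Y C ρ) (Set.Ioi 0) ∧
      StrictMonoOn (fun C => X C ρ) (Set.Ioi 0) ∧
      StrictAntiOn (fun C => Y C ρ) (Set.Ioi 0)) :=
  ⟨fun C hC => solveSysC_solution_rho_dependence hC fun ρ hρ => hXY C ρ hC hρ.1 hρ.2,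
    fun ρ hρ0 hρ1 => solveSysC_solution_C_dependence hρ0 hρ1 fun C hC => hXY C ρ hC hρ0 hρ1⟩
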